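/- Let d ≥ 2 and 0 < ε ≤ 1, and let f : ℝ^{d−1} → ℝ be a C¹ function with sup_{x'} |∇f(x')| ≤ ε. Let w : ℝ^d → ℂ be Lipschitz with compact support, and define v on Ω_f := {(x',x_d) ∈ ℝ^{d−1}×ℝ : x_d > f(x')} by v(x',x_d) := w(x', x_d − f(x')). Then v is Lipschitz on Ω_f and there is a constant C > 0 depending only on d such that | ∫_{Ω_f} |∇v(x)|² dx − ∫_{ℝ^d_+} |∇w(y)|² dy | ≤ C·ε·∫_{ℝ^d_+} |∇w(y)|² dy, where ℝ^d_+ := {(y',y_d) : y_d > 0} and the gradients (which exist almost everywhere) are integrated with respect to Lebesgue measure. -/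

import Mathlib

open MeasureTheory Real Filter Metric Asymptotics
open scoped ENNReal NNReal Topology ComplexConjugate

noncomputable section

/-- `ℝ^d` as a Euclidean space. -/
abbrev Euc (d : ℕ) : Type := EuclideanSpace ℝ (Fin d)

/-- `ω_k`, the Lebesgue measure of the unit ball in `ℝ^k`. -/
def ballVol (k : ℕ) : ℝ := (volume (Metric.ball (0 : Euc k) 1)).toReal

/-- The semiclassical constant `L¹_k = (2/(k+2))·(2π)^{-k}·ω_k`. -/
def weylL1 (k : ℕ) : ℝ := (2 / ((k : ℝ) + 2)) * (2 * π) ^ (-(k : ℝ)) * ballVol k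

/-- `|𝕊^{d-2}|`, the surface measure of the unit sphere in `ℝ^{d-1}`. -/
def sphereArea (d : ℕ) : ℝ := (μH[(d : ℝ) - 2] (Metric.sphere (0 : Euc (d - 1)) 1)).toReal

/-- The constant `C_d = 4·|𝕊^{d-2}|·(2π)^{-d}·(d²-1)⁻¹`. -/
def constCd (d : ℕ) : ℝ := 4 * sphereArea d * (2 * π) ^ (-(d : ℝ)) * ((d : ℝ) ^ 2 - 1)⁻¹

/-- Negative part `x₋ = max(-x,0)`. -/
def nPart (x : ℝ) : ℝ := max (-x) 0

/-- The boundary coefficient `L²_d(b)`. -/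
def weylL2 (d : ℕ) (b : ℝ) : ℝ :=
  if 0 < b then
    constCd d * (-(π / 4) +
      ∫ p in (0 : ℝ)..1, (1 - p ^ 2) ^ (((d : ℝ) + 1) / 2) * b / (b ^ 2 + p ^ 2))
  else if b = 0 then constCd d * (π / 4)
  else
    constCd d * (-(π / 4) +
      (∫ p in (0 : ℝ)..1, (1 - p ^ 2) ^ (((d : ℝ) + 1) / 2) * b / (b ^ 2 + p ^ 2)) +
      π * (b ^ 2 + 1) ^ (((d : ℝ) + 1) / 2))

/-- First `d-1` coordinates `x'` of `x ∈ ℝ^d`. -/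
def firstCoords (d : ℕ) (x : Euc d) : Euc (d - 1) :=
  WithLp.toLp 2 (fun (i : Fin (d - 1)) => x (Fin.castLE (Nat.sub_le d 1) i))

/-- Last coordinate `x_d` of `x ∈ ℝ^d`. -/
def lastCoord (d : ℕ) (x : Euc d) : ℝ :=
  if h : 0 < d then x ⟨d - 1, Nat.sub_lt h Nat.one_pos⟩ else 0

/-- The point `(x',0) ∈ ℝ^d` corresponding to `x' ∈ ℝ^{d-1}`. -/
def embedBdry (d : ℕ) (x' : Euc (d - 1)) : Euc d :=
  WithLp.toLp 2 (fun (i : Fin d) => if h : (i : ℕ) < d - 1 then x' ⟨(i : ℕ), h⟩ else 0)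

/-- The open region above the graph of `f : ℝ^{d-1} → ℝ`. -/
def upperGraph (d : ℕ) (f : Euc (d - 1) → ℝ) : Set (Euc d) :=
  {x | f (firstCoords d x) < lastCoord d x}

/-- The upper half-space `ℝ^d_+`. -/
def upperHalf (d : ℕ) : Set (Euc d) := {x | 0 < lastCoord d x}

/-- The boundary-straightening map `(x',x_d) ↦ (x', x_d - f(x'))`. -/
def straighten (d : ℕ) (f : Euc (d - 1) → ℝ) (x : Euc d) : Euc d :=
  WithLp.toLp 2 (fun (i : Fin d) => if (i : ℕ) < d - 1 then x i else x i - f (firstCoords d x))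

/-- `Ω` has `C¹` boundary with modulus of continuity `ω` for the gradients of the local charts:
at every boundary point there is an orthonormal coordinate system (an affine isometry `A`
centered at `x₀`), a radius `r > 0` and a `C¹` graph function `f` with `f 0 = 0`, `∇f(0) = 0`,
whose gradient has modulus of continuity `ω`, representing `Ω` locally as the region above
the graph of `f`. -/
def IsC1BoundaryWith (d : ℕ) (Ω : Set (Euc d)) (ω : ℝ → ℝ) : Prop :=
  ∀ x₀ ∈ frontier Ω, ∃ (A : Euc d ≃ᵃⁱ[ℝ] Euc d) (r : ℝ) (f : Euc (d - 1) → ℝ),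
    A 0 = x₀ ∧ 0 < r ∧ ContDiff ℝ 1 f ∧ f 0 = 0 ∧ fderiv ℝ f 0 = 0 ∧
    (∀ x' y', ‖fderiv ℝ f x' - fderiv ℝ f y'‖ ≤ ω (dist x' y')) ∧
    Ω ∩ Metric.ball x₀ r = (A '' upperGraph d f) ∩ Metric.ball x₀ r

/-- `Ω` has uniform `C¹` boundary: there is a common modulus of continuity, vanishing at `0`,
for the gradients of all local charts. -/
def HasC1Boundary (d : ℕ) (Ω : Set (Euc d)) : Prop :=
  ∃ ω : ℝ → ℝ, Monotone ω ∧ Tendsto ω (𝓝[>] (0 : ℝ)) (𝓝 0) ∧ IsC1BoundaryWith d Ω ω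

/-- `Ω` has Lipschitz boundary. -/
def HasLipschitzBoundary (d : ℕ) (Ω : Set (Euc d)) : Prop :=
  ∀ x₀ ∈ frontier Ω, ∃ (A : Euc d ≃ᵃⁱ[ℝ] Euc d) (r : ℝ) (f : Euc (d - 1) → ℝ) (K : ℝ≥0),
    A 0 = x₀ ∧ 0 < r ∧ LipschitzWith K f ∧
    Ω ∩ Metric.ball x₀ r = (A '' upperGraph d f) ∩ Metric.ball x₀ r

/-- `|∇w|²` for a complex-valued function `w`, i.e. `|∇(Re w)|² + |∇(Im w)|²`. -/
def gradSqC (d : ℕ) (w : Euc d → ℂ) (x : Euc d) : ℝ :=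
  ‖gradient (fun y => (w y).re) x‖ ^ 2 + ‖gradient (fun y => (w y).im) x‖ ^ 2

/-- `Tr(H(b))₋`: the variational trace of the negative part of the Robin operator
`h²(-Δ) - 1` on `Ω` with boundary coefficient `b`. -/
def robinTrace (d : ℕ) (Ω : Set (Euc d)) (b : Euc d → ℝ) (h : ℝ) : ℝ :=
  sSup {T : ℝ | ∃ (N : ℕ) (v : Fin N → Euc d → ℂ),
    (∀ j, ContDiff ℝ 1 (v j)) ∧
    (∀ j k, (∫ x in Ω, conj (v j x) * v k x) = if j = k then 1 else 0) ∧
    T = ∑ j, ((∫ x in Ω, ‖v j x‖ ^ 2)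
        - h ^ 2 * (∫ x in Ω, gradSqC d (v j) x)
        - h * (∫ x in frontier Ω, b x * ‖v j x‖ ^ 2 ∂(μH[(d : ℝ) - 1])))}

/-- `Tr(φ H(b) φ)₋`: variational trace of the localized Robin operator on `Ω`. -/
def locTrace (d : ℕ) (Ω : Set (Euc d)) (b : Euc d → ℝ) (φ : Euc d → ℝ) (h : ℝ) : ℝ :=
  sSup {T : ℝ | ∃ (N : ℕ) (v : Fin N → Euc d → ℂ),
    (∀ j, ContDiff ℝ 1 (v j)) ∧
    (∀ j k, (∫ x in Ω, conj (v j x) * v k x) = if j = k then 1 else 0) ∧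
    T = ∑ j, ((∫ x in Ω, φ x ^ 2 * ‖v j x‖ ^ 2)
        - h ^ 2 * (∫ x in Ω, gradSqC d (fun y => (φ y : ℂ) * v j y) x)
        - h * (∫ x in frontier Ω,
            b x * (φ x ^ 2 * ‖v j x‖ ^ 2) ∂(μH[(d : ℝ) - 1])))}

/-- `Tr(φ(-Δ_b - Λ)φ)₋`: variational trace of the localized Robin operator at energy `Λ`. -/
def locTraceL (d : ℕ) (Ω : Set (Euc d)) (b : Euc d → ℝ) (φ : Euc d → ℝ) (Λ : ℝ) : ℝ :=
  sSup {T : ℝ | ∃ (N : ℕ) (v : Fin N → Euc d → ℂ),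
    (∀ j, ContDiff ℝ 1 (v j)) ∧
    (∀ j k, (∫ x in Ω, conj (v j x) * v k x) = if j = k then 1 else 0) ∧
    T = ∑ j, (Λ * (∫ x in Ω, φ x ^ 2 * ‖v j x‖ ^ 2)
        - (∫ x in Ω, gradSqC d (fun y => (φ y : ℂ) * v j y) x)
        - (∫ x in frontier Ω,
            b x * (φ x ^ 2 * ‖v j x‖ ^ 2) ∂(μH[(d : ℝ) - 1])))}

/-- `Tr(φ(-h²Δ-1)φ)₋` on all of `ℝ^d` (no boundary). -/
def freeTrace (d : ℕ) (φ : Euc d → ℝ) (h : ℝ) : ℝ :=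
  sSup {T : ℝ | ∃ (N : ℕ) (v : Fin N → Euc d → ℂ),
    (∀ j, ContDiff ℝ 1 (v j)) ∧
    (∀ j k, (∫ x, conj (v j x) * v k x) = if j = k then 1 else 0) ∧
    T = ∑ j, ((∫ x, φ x ^ 2 * ‖v j x‖ ^ 2)
        - h ^ 2 * (∫ x, gradSqC d (fun y => (φ y : ℂ) * v j y) x))}

/-- `Tr(φ H⁺(b) φ)₋`: variational trace of the localized Robin operator on the half-space. -/
def halfTrace (d : ℕ) (b : ℝ) (φ : Euc d → ℝ) (h : ℝ) : ℝ :=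
  sSup {T : ℝ | ∃ (N : ℕ) (v : Fin N → Euc d → ℂ),
    (∀ j, ContDiff ℝ 1 (v j)) ∧
    (∀ j k, (∫ x in upperHalf d, conj (v j x) * v k x) = if j = k then 1 else 0) ∧
    T = ∑ j, ((∫ x in upperHalf d, φ x ^ 2 * ‖v j x‖ ^ 2)
        - h ^ 2 * (∫ x in upperHalf d, gradSqC d (fun y => (φ y : ℂ) * v j y) x)
        - h * b * (∫ x' : Euc (d - 1),
            φ (embedBdry d x') ^ 2 * ‖v j (embedBdry d x')‖ ^ 2))}

/-- The generalized eigenfunction `ψ_b(t)`. -/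
def psiF (b t : ℝ) : ℝ := (Real.cos t + b * Real.sin t) / Real.sqrt (1 + b ^ 2)

/-- The bound state `Ψ_b(t)` (vanishing for `b ≥ 0`). -/
def psiBig (b t : ℝ) : ℝ := if b < 0 then Real.sqrt (-2 * b) * Real.exp (b * t) else 0

/-- The function `I_b(t)`. -/
def Ifun (d : ℕ) (b t : ℝ) : ℝ :=
  ∫ p in (0 : ℝ)..1, (1 - p ^ 2) ^ (((d : ℝ) + 1) / 2) *
    ((p ^ 2 - b ^ 2) / (p ^ 2 + b ^ 2) * Real.cos (2 * t * p) +
      2 * p * b / (p ^ 2 + b ^ 2) * Real.sin (2 * t * p))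

/-- The localization scale `l(u) = ½(1 + (dist(u,Ωᶜ)² + l₀²)^{-1/2})⁻¹`. -/
def radFun (d : ℕ) (Ω : Set (Euc d)) (l₀ : ℝ) (u : Euc d) : ℝ :=
  (1 / 2) * (1 + (Real.sqrt (Metric.infDist u Ωᶜ ^ 2 + l₀ ^ 2))⁻¹)⁻¹

end

/-! The straightening map `S (x', x_d) = (x', x_d - f x')` is a shear: its Jacobian
`id - (f' ∘ x') • e_d` has determinant one, so `S` preserves Lebesgue measure, and it maps the
region above the graph onto the half-space, with `‖DS - id‖ ≤ sup ‖f'‖ ≤ ε`. Wherever `w` is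
differentiable at `S x` (almost everywhere, by measure preservation) the chain rule gives
`Dv(x) = Dw(S x) ∘ DS(x)`, hence `| |∇v|² - |∇w ∘ S|² | ≤ 3ε |∇w ∘ S|²`; integrating and changing
variables `y = S x` gives the estimate with `C = 3`. -/

theorem ContinuousLinearMap.det_id_sub_smulRight {𝕜 E : Type*} [NontriviallyNormedField 𝕜]
    [NormedAddCommGroup E] [NormedSpace 𝕜 E] [FiniteDimensional 𝕜 E] (c : E →L[𝕜] 𝕜) (v : E) :
    (ContinuousLinearMap.id 𝕜 E - c.smulRight v).det = 1 - c v := by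
  have h : ((ContinuousLinearMap.id 𝕜 E - c.smulRight v : E →L[𝕜] E) : E →ₗ[𝕜] E)
      = LinearMap.transvection (-(c : E →ₗ[𝕜] 𝕜)) v := by
    ext x
    simp [LinearMap.transvection.apply, sub_eq_add_neg]
  rw [ContinuousLinearMap.det, h, LinearMap.transvection.det]
  simp [sub_eq_add_neg]

theorem ContinuousLinearMap.abs_sq_norm_comp_sub_sq_norm_le {𝕜 E F : Type*}
    [NontriviallyNormedField 𝕜] [SeminormedAddCommGroup E] [NormedSpace 𝕜 E]
    [SeminormedAddCommGroup F] [NormedSpace 𝕜 F] {ε : ℝ} (hε : ε ≤ 1) (A : E →L[𝕜] F)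
    {B : E →L[𝕜] E} (hB : ‖B - ContinuousLinearMap.id 𝕜 E‖ ≤ ε) :
    |‖A.comp B‖ ^ 2 - ‖A‖ ^ 2| ≤ 3 * ε * ‖A‖ ^ 2 := by
  have hε0 : 0 ≤ ε := (norm_nonneg _).trans hB
  have hdist : |‖A.comp B‖ - ‖A‖| ≤ ε * ‖A‖ :=
    calc |‖A.comp B‖ - ‖A‖| ≤ ‖A.comp B - A‖ := abs_norm_sub_norm_le _ _
      _ = ‖A.comp (B - ContinuousLinearMap.id 𝕜 E)‖ := by
          rw [ContinuousLinearMap.comp_sub, ContinuousLinearMap.comp_id]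
      _ ≤ ‖A‖ * ε := (A.opNorm_comp_le _).trans (by gcongr)
      _ = ε * ‖A‖ := mul_comm _ _
  have hsum : ‖A.comp B‖ + ‖A‖ ≤ 3 * ‖A‖ := by
    have := (abs_le.mp hdist).2
    nlinarith [norm_nonneg A]
  calc |‖A.comp B‖ ^ 2 - ‖A‖ ^ 2| = |‖A.comp B‖ - ‖A‖| * (‖A.comp B‖ + ‖A‖) := by
        rw [sq_sub_sq, abs_mul, abs_of_nonneg (by positivity : (0:ℝ) ≤ ‖A.comp B‖ + ‖A‖), mul_comm]
    _ ≤ ε * ‖A‖ * (3 * ‖A‖) := by gcongr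
    _ = 3 * ε * ‖A‖ ^ 2 := by ring

theorem MeasureTheory.abs_integral_sub_le_of_ae_abs_sub_le {α : Type*} [MeasurableSpace α]
    {μ : Measure α} {F G : α → ℝ} {c : ℝ} (hF : AEStronglyMeasurable F μ) (hG : Integrable G μ)
    (h : ∀ᵐ x ∂μ, |F x - G x| ≤ c * G x) :
    |∫ x, F x ∂μ - ∫ x, G x ∂μ| ≤ c * ∫ x, G x ∂μ := by
  have hFG : Integrable (fun x => F x - G x) μ :=
    (hG.const_mul c).mono' (hF.sub hG.aestronglyMeasurable) h
  have hF' : Integrable F μ :=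
    (hFG.add hG).congr (.of_forall fun x => sub_add_cancel (F x) (G x))
  calc |∫ x, F x ∂μ - ∫ x, G x ∂μ| = |∫ x, (F x - G x) ∂μ| := by rw [integral_sub hF' hG]
    _ ≤ ∫ x, |F x - G x| ∂μ := abs_integral_le_integral_abs
    _ ≤ ∫ x, c * G x ∂μ := integral_mono_ae hFG.abs (hG.const_mul c) h
    _ = c * ∫ x, G x ∂μ := integral_const_mul c _

theorem norm_gradient {F : Type*} [NormedAddCommGroup F] [InnerProductSpace ℝ F] [CompleteSpace F]
    (u : F → ℝ) (x : F) : ‖gradient u x‖ = ‖fderiv ℝ u x‖ :=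
  (InnerProductSpace.toDual ℝ F).symm.norm_map _

section GradSq

variable {d : ℕ}

lemma gradSqC_eq (g : Euc d → ℂ) (x : Euc d) :
    gradSqC d g x = ‖fderiv ℝ (fun y => (g y).re) x‖ ^ 2
      + ‖fderiv ℝ (fun y => (g y).im) x‖ ^ 2 := by
  rw [gradSqC, norm_gradient, norm_gradient]

lemma gradSqC_nonneg (g : Euc d → ℂ) (x : Euc d) : 0 ≤ gradSqC d g x := by
  rw [gradSqC]; positivity

lemma measurable_gradSqC (g : Euc d → ℂ) : Measurable (gradSqC d g) := by
  simp_rw [funext (gradSqC_eq g)]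
  fun_prop

lemma gradSqC_le_of_lipschitzWith {g : Euc d → ℂ} {K : ℝ≥0} (hg : LipschitzWith K g)
    (x : Euc d) : gradSqC d g x ≤ 2 * (K : ℝ) ^ 2 := by
  have hre : ‖fderiv ℝ (fun y => (g y).re) x‖ ≤ K := by
    refine norm_fderiv_le_of_lipschitz ℝ ?_
    simpa [Function.comp_def] using RCLike.lipschitzWith_re.comp hg
  have him : ‖fderiv ℝ (fun y => (g y).im) x‖ ≤ K := by
    refine norm_fderiv_le_of_lipschitz ℝ ?_
    simpa [Function.comp_def] using RCLike.lipschitzWith_im.comp hg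
  rw [gradSqC_eq, two_mul]
  gcongr

lemma gradSqC_eq_zero_of_notMem_tsupport {g : Euc d → ℂ} {x : Euc d} (hx : x ∉ tsupport g) :
    gradSqC d g x = 0 := by
  have hg : g =ᶠ[𝓝 x] 0 := notMem_tsupport_iff_eventuallyEq.mp hx
  have hre : (fun y => (g y).re) =ᶠ[𝓝 x] fun _ => 0 := hg.mono fun y hy => by simp [hy]
  have him : (fun y => (g y).im) =ᶠ[𝓝 x] fun _ => 0 := hg.mono fun y hy => by simp [hy]
  simp [gradSqC_eq, hre.fderiv_eq, him.fderiv_eq]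

lemma integrable_gradSqC {g : Euc d → ℂ} {K : ℝ≥0} (hg : LipschitzWith K g)
    (hs : HasCompactSupport g) : Integrable (gradSqC d g) := by
  rw [← integrableOn_iff_integrable_of_support_subset fun x hx =>
    by_contra fun h => hx (gradSqC_eq_zero_of_notMem_tsupport h)]
  refine IntegrableOn.of_bound (IsCompact.measure_lt_top hs)
    (measurable_gradSqC g).aestronglyMeasurable (2 * (K : ℝ) ^ 2) (.of_forall fun x => ?_)
  rw [Real.norm_of_nonneg (gradSqC_nonneg g x)]
  exact gradSqC_le_of_lipschitzWith hg x

theorem abs_gradSqC_comp_sub_le {g : Euc d → ℂ} {S : Euc d → Euc d} {S' : Euc d →L[ℝ] Euc d}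
    {x : Euc d} {ε : ℝ} (hε : ε ≤ 1) (hg : DifferentiableAt ℝ g (S x)) (hS : HasFDerivAt S S' x)
    (hS' : ‖S' - ContinuousLinearMap.id ℝ (Euc d)‖ ≤ ε) :
    |gradSqC d (fun y => g (S y)) x - gradSqC d g (S x)| ≤ 3 * ε * gradSqC d g (S x) := by
  have hre : fderiv ℝ (fun y => (g (S y)).re) x = (fderiv ℝ (fun y => (g y).re) (S x)).comp S' :=
    ((Complex.reCLM.differentiableAt.comp _ hg).hasFDerivAt.comp x hS).fderiv
  have him : fderiv ℝ (fun y => (g (S y)).im) x = (fderiv ℝ (fun y => (g y).im) (S x)).comp S' :=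
    ((Complex.imCLM.differentiableAt.comp _ hg).hasFDerivAt.comp x hS).fderiv
  rw [gradSqC_eq, gradSqC_eq, hre, him]
  set A := fderiv ℝ (fun y => (g y).re) (S x)
  set B := fderiv ℝ (fun y => (g y).im) (S x)
  calc _ = |(‖A.comp S'‖ ^ 2 - ‖A‖ ^ 2) + (‖B.comp S'‖ ^ 2 - ‖B‖ ^ 2)| := by ring_nf
    _ ≤ |‖A.comp S'‖ ^ 2 - ‖A‖ ^ 2| + |‖B.comp S'‖ ^ 2 - ‖B‖ ^ 2| := abs_add_le _ _
    _ ≤ 3 * ε * ‖A‖ ^ 2 + 3 * ε * ‖B‖ ^ 2 :=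
        add_le_add (A.abs_sq_norm_comp_sub_sq_norm_le hε hS')
          (B.abs_sq_norm_comp_sub_sq_norm_le hε hS')
    _ = _ := by ring

end GradSq

namespace Straightening

variable {d : ℕ}

def lastIdx (hd : 0 < d) : Fin d := ⟨d - 1, by omega⟩

lemma lastCoord_eq_apply (hd : 0 < d) (x : Euc d) : lastCoord d x = x (lastIdx hd) := by
  simp [lastCoord, hd, lastIdx]

noncomputable def firstCoordsCLM (d : ℕ) : Euc d →L[ℝ] Euc (d - 1) :=
  LinearMap.toContinuousLinearMap
    { toFun := firstCoords d
      map_add' := fun _ _ => rfl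
      map_smul' := fun _ _ => rfl }

@[simp]
lemma firstCoordsCLM_apply (x : Euc d) : firstCoordsCLM d x = firstCoords d x := rfl

lemma norm_firstCoords_le (x : Euc d) : ‖firstCoords d x‖ ≤ ‖x‖ := by
  rw [EuclideanSpace.norm_eq, EuclideanSpace.norm_eq]
  refine Real.sqrt_le_sqrt ?_
  calc ∑ i, ‖firstCoords d x i‖ ^ 2
      = ∑ j ∈ Finset.univ.map (Fin.castLEEmb (Nat.sub_le d 1)), ‖x j‖ ^ 2 := by
        simp [firstCoords]
    _ ≤ ∑ j, ‖x j‖ ^ 2 :=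
        Finset.sum_le_sum_of_subset_of_nonneg (Finset.subset_univ _) fun _ _ _ => by positivity

lemma norm_firstCoordsCLM_le : ‖firstCoordsCLM d‖ ≤ 1 :=
  (firstCoordsCLM d).opNorm_le_bound zero_le_one fun x => by simpa using norm_firstCoords_le x

noncomputable def lastUnit (hd : 0 < d) : Euc d := EuclideanSpace.single (lastIdx hd) 1

lemma norm_lastUnit (hd : 0 < d) : ‖lastUnit hd‖ = 1 := by
  simp [lastUnit]

lemma firstCoords_lastUnit (hd : 0 < d) : firstCoords d (lastUnit hd) = 0 := by
  ext i
  have : Fin.castLE (Nat.sub_le d 1) i ≠ lastIdx hd := by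
    simp [Fin.ext_iff, lastIdx]; omega
  simp [firstCoords, lastUnit, this]

lemma straighten_eq_sub_smul (hd : 0 < d) (f : Euc (d - 1) → ℝ) (x : Euc d) :
    straighten d f x = x - f (firstCoords d x) • lastUnit hd := by
  ext i
  by_cases h : (i : ℕ) < d - 1
  · have : i ≠ lastIdx hd := by simp [Fin.ext_iff, lastIdx]; omega
    simp [straighten, h, lastUnit, this]
  · obtain rfl : i = lastIdx hd := by simp [Fin.ext_iff, lastIdx]; omega
    simp [straighten, h, lastUnit]

lemma firstCoords_straighten (hd : 0 < d) (f : Euc (d - 1) → ℝ) (x : Euc d) :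
    firstCoords d (straighten d f x) = firstCoords d x := by
  rw [straighten_eq_sub_smul hd, ← firstCoordsCLM_apply, map_sub, map_smul, firstCoordsCLM_apply,
    firstCoordsCLM_apply, firstCoords_lastUnit, smul_zero, sub_zero]

lemma lastCoord_straighten (hd : 0 < d) (f : Euc (d - 1) → ℝ) (x : Euc d) :
    lastCoord d (straighten d f x) = lastCoord d x - f (firstCoords d x) := by
  simpa [lastCoord_eq_apply hd, lastUnit] using
    congrArg (· (lastIdx hd)) (straighten_eq_sub_smul hd f x)

lemma straighten_neg_straighten (hd : 0 < d) (f : Euc (d - 1) → ℝ) (x : Euc d) :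
    straighten d (-f) (straighten d f x) = x := by
  rw [straighten_eq_sub_smul hd (-f), firstCoords_straighten hd, straighten_eq_sub_smul hd f]
  simp

lemma preimage_straighten_upperHalf (hd : 0 < d) (f : Euc (d - 1) → ℝ) :
    straighten d f ⁻¹' upperHalf d = upperGraph d f := by
  ext x
  simp [upperHalf, upperGraph, lastCoord_straighten hd]

lemma continuous_straighten (hd : 0 < d) {f : Euc (d - 1) → ℝ} (hf : Continuous f) :
    Continuous (straighten d f) := by
  simp_rw [funext (straighten_eq_sub_smul hd f), ← firstCoordsCLM_apply]
  fun_prop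

noncomputable def straightenHomeomorph (hd : 0 < d) {f : Euc (d - 1) → ℝ} (hf : Continuous f) :
    Euc d ≃ₜ Euc d where
  toFun := straighten d f
  invFun := straighten d (-f)
  left_inv := straighten_neg_straighten hd f
  right_inv x := by simpa using straighten_neg_straighten hd (-f) x
  continuous_toFun := continuous_straighten hd hf
  continuous_invFun := continuous_straighten hd hf.neg

noncomputable def straightenDeriv (hd : 0 < d) (f' : Euc (d - 1) →L[ℝ] ℝ) : Euc d →L[ℝ] Euc d :=
  ContinuousLinearMap.id ℝ (Euc d) - (f'.comp (firstCoordsCLM d)).smulRight (lastUnit hd)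

lemma hasFDerivAt_straighten (hd : 0 < d) {f : Euc (d - 1) → ℝ} {f' : Euc (d - 1) →L[ℝ] ℝ}
    {x : Euc d} (hf : HasFDerivAt f f' (firstCoords d x)) :
    HasFDerivAt (straighten d f) (straightenDeriv hd f') x := by
  simp_rw [funext (straighten_eq_sub_smul hd f), ← firstCoordsCLM_apply]
  exact (hasFDerivAt_id x).sub ((hf.comp x (firstCoordsCLM d).hasFDerivAt).smul_const _)

lemma det_straightenDeriv (hd : 0 < d) (f' : Euc (d - 1) →L[ℝ] ℝ) :
    (straightenDeriv hd f').det = 1 := by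
  simp [straightenDeriv, ContinuousLinearMap.det_id_sub_smulRight, firstCoords_lastUnit]

lemma norm_straightenDeriv_sub_id_le (hd : 0 < d) (f' : Euc (d - 1) →L[ℝ] ℝ) :
    ‖straightenDeriv hd f' - ContinuousLinearMap.id ℝ (Euc d)‖ ≤ ‖f'‖ := by
  rw [straightenDeriv, sub_sub_cancel_left, norm_neg, ContinuousLinearMap.norm_smulRight_apply,
    norm_lastUnit, mul_one]
  exact (f'.opNorm_comp_le _).trans (mul_le_of_le_one_right (norm_nonneg _) norm_firstCoordsCLM_le)

theorem measurePreserving_straighten (hd : 0 < d) {f : Euc (d - 1) → ℝ}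
    (hf : Differentiable ℝ f) : MeasurePreserving (straighten d f) := by
  have hmeas := (continuous_straighten hd hf.continuous).measurable
  refine ⟨hmeas, Measure.ext fun s hs => ?_⟩
  have hpre : straighten d f ⁻¹' s = straighten d (-f) '' s :=
    (congrFun (straightenHomeomorph hd hf.continuous).image_symm s).symm
  rw [Measure.map_apply hmeas hs, hpre,
    ← lintegral_abs_det_fderiv_eq_addHaar_image volume hs
      (fun x _ => (hasFDerivAt_straighten hd (hf.neg _).hasFDerivAt).hasFDerivWithinAt)
      (straightenHomeomorph hd hf.neg.continuous).injective.injOn]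
  simp [det_straightenDeriv]

theorem lipschitzWith_straighten (hd : 0 < d) {f : Euc (d - 1) → ℝ} (hf : Differentiable ℝ f)
    (hf' : ∀ x', ‖fderiv ℝ f x'‖ ≤ 1) : LipschitzWith 2 (straighten d f) := by
  have hS x := hasFDerivAt_straighten (x := x) hd (hf (firstCoords d x)).hasFDerivAt
  refine lipschitzWith_of_nnnorm_fderiv_le (fun x => (hS x).differentiableAt) fun x => ?_
  rw [← NNReal.coe_le_coe, coe_nnnorm, (hS x).fderiv]
  calc _ ≤ ‖ContinuousLinearMap.id ℝ (Euc d)‖ + ‖straightenDeriv hd (fderiv ℝ f (firstCoords d x))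
          - ContinuousLinearMap.id ℝ (Euc d)‖ := norm_le_norm_add_norm_sub' _ _
    _ ≤ 1 + 1 := add_le_add ContinuousLinearMap.norm_id_le
          ((norm_straightenDeriv_sub_id_le hd _).trans (hf' _))
    _ = 2 := by norm_num

end Straightening

open Straightening in
/-- **Straightening the boundary** (Lemma 4.1 of Frank–Geisinger): for a `C¹` graph
function `f` with `sup|∇f| ≤ ε ≤ 1` and a Lipschitz compactly supported `w`,
the pullback `v = w ∘ (x ↦ (x', x_d - f(x')))` is Lipschitz on the region above the graph
and its Dirichlet integral differs from that of `w` by at most `Cε ∫|∇w|²`. -/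
theorem straightening_dirichlet_estimate (d : ℕ) (hd : 2 ≤ d) :
    ∃ C : ℝ, 0 < C ∧ ∀ (ε : ℝ), 0 < ε → ε ≤ 1 →
      ∀ f : Euc (d - 1) → ℝ, ContDiff ℝ 1 f → (∀ x', ‖fderiv ℝ f x'‖ ≤ ε) →
      ∀ (w : Euc d → ℂ) (K : ℝ≥0), LipschitzWith K w → HasCompactSupport w →
        (∃ K' : ℝ≥0, LipschitzOnWith K'
            (fun x => w (straighten d f x)) (upperGraph d f)) ∧
        |(∫ x in upperGraph d f, gradSqC d (fun y => w (straighten d f y)) x)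
            - ∫ y in upperHalf d, gradSqC d w y|
          ≤ C * ε * ∫ y in upperHalf d, gradSqC d w y := by
  refine ⟨3, three_pos, fun ε _ hε f hf hgrad w K hw hsupp => ?_⟩
  have hd₀ : 0 < d := by omega
  have hfd : Differentiable ℝ f := hf.differentiable one_ne_zero
  constructor
  · exact ⟨K * 2, (hw.comp (lipschitzWith_straighten hd₀ hfd fun x' =>
      (hgrad x').trans hε)).lipschitzOnWith⟩
  have hS := measurePreserving_straighten hd₀ hfd
  rw [← hS.setIntegral_preimage_emb
      (straightenHomeomorph hd₀ hfd.continuous).isClosedEmbedding.measurableEmbedding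
      (gradSqC d w) (upperHalf d),
    preimage_straighten_upperHalf hd₀]
  refine abs_integral_sub_le_of_ae_abs_sub_le (measurable_gradSqC _).aestronglyMeasurable
    ((hS.integrable_comp_of_integrable (integrable_gradSqC hw hsupp)).integrableOn)
    (ae_restrict_of_ae ?_)
  filter_upwards [hS.quasiMeasurePreserving.ae hw.ae_differentiableAt] with x hx
  exact abs_gradSqC_comp_sub_le hε hx (hasFDerivAt_straighten hd₀ (hfd _).hasFDerivAt)
    ((norm_straightenDeriv_sub_id_le hd₀ _).trans (hgrad _))
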